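/- With respect to the negative degree reverse lexicographic monomial order on k[z_1,…,z_{r+1}] induced by z_{r+1} > ⋯ > z_1, the set G = {P_1,…,P_r}, where P_i = z_{i+1}^a − z_i^b, is a minimal Gröbner basis of the defining ideal 𝔭 of the monomial curve defined by S; in particular LM(P_i) = z_{i+1}^a for i = 1,…,r. -/

import Mathlib

open MvPolynomial CategoryTheory

set_option maxHeartbeats 1000000
set_option synthInstance.maxHeartbeats 400000

noncomputable section

namespace AffineSG

/-- The total degree of an exponent vector. -/
def edeg {n : ℕ} (u : Fin n →₀ ℕ) : ℕ := u.sum fun _ e => e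

/-- `ndrlGT u v` means that the monomial with exponent vector `u` is strictly greater than
the one with exponent vector `v` in the negative degree reverse lexicographic order induced by
`z_n > ⋯ > z_1` (the variable with larger index is the larger variable). -/
def ndrlGT {n : ℕ} (u v : Fin n →₀ ℕ) : Prop :=
  edeg u < edeg v ∨
    (edeg u = edeg v ∧ ∃ i : Fin n, u i < v i ∧ ∀ j : Fin n, j < i → u j = v j)

/-- `IsLM f m` : the exponent vector `m` is the leading monomial of `f` with respect to the
negative degree reverse lexicographic order. -/
def IsLM {n : ℕ} {k : Type} [Field k] (f : MvPolynomial (Fin n) k) (m : Fin n →₀ ℕ) : Prop :=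
  m ∈ f.support ∧ ∀ m' ∈ f.support, m' ≠ m → ndrlGT m m'

/-- `G` is a Gröbner (standard) basis of `I` with respect to the negative degree reverse
lexicographic order: `G ⊆ I` and the leading monomial of every nonzero element of `I` is
divisible by the leading monomial of some element of `G`. -/
def IsGroebnerBasis {n : ℕ} {k : Type} [Field k] (G : Finset (MvPolynomial (Fin n) k))
    (I : Ideal (MvPolynomial (Fin n) k)) : Prop :=
  (↑G : Set (MvPolynomial (Fin n) k)) ⊆ (I : Set (MvPolynomial (Fin n) k)) ∧
    ∀ f ∈ I, f ≠ 0 → ∃ g ∈ G, ∃ mg mf, IsLM g mg ∧ IsLM f mf ∧ mg ≤ mf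

/-- A minimal Gröbner basis: a Gröbner basis consisting of nonzero polynomials no leading
monomial of which divides the leading monomial of another element. -/
def IsMinimalGroebnerBasis {n : ℕ} {k : Type} [Field k] (G : Finset (MvPolynomial (Fin n) k))
    (I : Ideal (MvPolynomial (Fin n) k)) : Prop :=
  IsGroebnerBasis G I ∧ (0 : MvPolynomial (Fin n) k) ∉ G ∧
    ∀ g ∈ G, ∀ g' ∈ G, g ≠ g' → ∀ mg mg', IsLM g mg → IsLM g' mg' → ¬ mg ≤ mg'

/-- The toric ideal (defining ideal) attached to a family `g` of lattice points in `ℕ^d`: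
the kernel of `z_i ↦ x^{g i}`. -/
def famIdeal (k : Type) [Field k] {n d : ℕ} (g : Fin n → (Fin d → ℕ)) :
    Ideal (MvPolynomial (Fin n) k) :=
  RingHom.ker (MvPolynomial.aeval
    (fun i => MvPolynomial.monomial (Finsupp.equivFunOnFinite.symm (g i)) (1 : k)) :
      MvPolynomial (Fin n) k →ₐ[k] MvPolynomial (Fin d) k)

/-- A simplicial affine semigroup fully embedded in `ℕ^d`, minimally generated by
`gen 0, …, gen (d+r-1)`, whose set of extremal rays consists of the first `d` generators. -/
structure SimplicialAffineSemigroup (d r : ℕ) where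
  gen : Fin (d + r) → (Fin d → ℕ)
  gen_ne_zero : ∀ i, gen i ≠ 0
  li : LinearIndependent ℚ (fun (i : Fin d) (j : Fin d) => ((gen (Fin.castAdd r i) j : ℚ)))
  cone : ∀ i : Fin (d + r), ∃ c : Fin d → ℚ, (∀ j, 0 ≤ c j) ∧
    (fun j => (gen i j : ℚ)) = ∑ j : Fin d, c j • (fun l => (gen (Fin.castAdd r j) l : ℚ))
  minimal : ∀ i, gen i ∉ AddSubmonoid.closure (Set.range gen \ {gen i})

namespace SimplicialAffineSemigroup

variable {d r : ℕ}

/-- The underlying semigroup (as a set): the additive submonoid generated by the generators. -/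
def mem (S : SimplicialAffineSemigroup d r) (s : Fin d → ℕ) : Prop :=
  s ∈ AddSubmonoid.closure (Set.range S.gen)

/-- The defining ideal `I(S)` of the semigroup ring `k[S]`. -/
def definingIdeal (k : Type) [Field k] (S : SimplicialAffineSemigroup d r) :
    Ideal (MvPolynomial (Fin (d + r)) k) :=
  famIdeal k S.gen

end SimplicialAffineSemigroup

/-- The smallest degree of a monomial appearing in `f`. -/
def minDeg {n : ℕ} {k : Type} [Field k] (f : MvPolynomial (Fin n) k) : ℕ :=
  sInf (edeg '' (f.support : Set (Fin n →₀ ℕ)))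

/-- The initial form `f*` of `f`: the homogeneous component of least degree of `f`. -/
def initialForm {n : ℕ} {k : Type} [Field k] (f : MvPolynomial (Fin n) k) :
    MvPolynomial (Fin n) k :=
  MvPolynomial.homogeneousComponent (minDeg f) f

/-- `I*`, the ideal generated by the initial forms of the elements of `I`;
one has `gr_𝔪(A/I) ≅ A/I*`. -/
def starIdeal {n : ℕ} {k : Type} [Field k] (I : Ideal (MvPolynomial (Fin n) k)) :
    Ideal (MvPolynomial (Fin n) k) :=
  Ideal.span { g | ∃ f ∈ I, f ≠ 0 ∧ g = initialForm f }

/-- A finite set `J ⊆ I` is a standard basis of `I` if the initial forms of its elements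
generate `I*`. -/
def IsStandardBasis {n : ℕ} {k : Type} [Field k] (J : Finset (MvPolynomial (Fin n) k))
    (I : Ideal (MvPolynomial (Fin n) k)) : Prop :=
  (↑J : Set (MvPolynomial (Fin n) k)) ⊆ (I : Set (MvPolynomial (Fin n) k)) ∧
    starIdeal I = Ideal.span (initialForm '' (↑J : Set (MvPolynomial (Fin n) k)))

/-- The ideal of a commutative ring generated by the images of the variables under the
quotient map; for `A/I` this is the distinguished (graded) maximal ideal `𝔪`. -/
def quotMax {n : ℕ} {k : Type} [Field k] (I : Ideal (MvPolynomial (Fin n) k)) :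
    Ideal (MvPolynomial (Fin n) k ⧸ I) :=
  Ideal.map (Ideal.Quotient.mk I) (Ideal.span (Set.range (MvPolynomial.X : Fin n → MvPolynomial (Fin n) k)))

/-- `J` is a reduction ideal of `I`: `J ⊆ I` and `J I^n = I^{n+1}` for all large `n`. -/
def IsReductionIdeal {R : Type} [CommRing R] (J I : Ideal R) : Prop :=
  J ≤ I ∧ ∃ N : ℕ, ∀ n ≥ N, J * I ^ n = I ^ (n + 1)

/-- A commutative ring `R` with distinguished (maximal) ideal `m` is Cohen–Macaulay if
there is a regular sequence on `R` consisting of elements of `m` whose length is the Krull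
dimension of `R`. -/
def IsCM (R : Type) [CommRing R] (m : Ideal R) : Prop :=
  ∃ rs : List R, (∀ x ∈ rs, x ∈ m) ∧ RingTheory.Sequence.IsRegular R rs ∧
    ringKrullDim R = rs.length

/-- The depth of `R` with respect to the ideal `m`: the supremum of the lengths of regular
sequences on `R` consisting of elements of `m`. -/
def ringDepth (R : Type) [CommRing R] (m : Ideal R) : ℕ∞ :=
  sSup ((fun rs : List R => (rs.length : ℕ∞)) ''
    { rs : List R | (∀ x ∈ rs, x ∈ m) ∧ RingTheory.Sequence.IsRegular R rs })

/-- The length of a module, realized as the Krull dimension of its lattice of submodules. -/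
def moduleLength (R M : Type) [CommRing R] [AddCommGroup M] [Module R M] : WithBot ℕ∞ :=
  Order.krullDim (Submodule R M)

/-- The `i`-th Betti number of the `R`-module `M` with respect to the distinguished maximal
ideal `m`, namely the length of `Tor_i^R(R/m, M)`. -/
def bettiNumber (R : Type) [CommRing R] (m : Ideal R) (M : Type) [AddCommGroup M] [Module R M]
    (i : ℕ) : WithBot ℕ∞ :=
  moduleLength R (((Tor (ModuleCat R) i).obj (ModuleCat.of R (R ⧸ m))).obj (ModuleCat.of R M))

/-- The height of an ideal. -/
def idealHeight {R : Type} [CommRing R] (I : Ideal R) : ℕ∞ :=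
  sInf { n : ℕ∞ | ∃ p : PrimeSpectrum R, I ≤ p.asIdeal ∧ n = Order.height p }

/-- The minimal number of generators of an ideal. -/
def mu {R : Type} [CommRing R] (I : Ideal R) : ℕ∞ :=
  sInf { n : ℕ∞ | ∃ s : Finset R, (s.card : ℕ∞) = n ∧ Ideal.span (↑s : Set R) = I }

/-- An ideal `I` of a polynomial ring is a complete intersection if its height equals its
minimal number of generators. -/
def IsCompleteIntersectionIdeal {R : Type} [CommRing R] (I : Ideal R) : Prop :=
  idealHeight I = mu I


/-- `p` is a factorization of `s` in terms of the generating family `g`. -/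
def FamFactorization {n d : ℕ} (g : Fin n → (Fin d → ℕ)) (p : Fin n → ℕ) (s : Fin d → ℕ) :
    Prop :=
  ∑ i, p i • g i = s

/-- `s` belongs to the affine semigroup generated by the family `g`. -/
def FamMem {n d : ℕ} (g : Fin n → (Fin d → ℕ)) (s : Fin d → ℕ) : Prop :=
  ∃ p, FamFactorization g p s

/-- `s` belongs to the Apéry set `AP(S,E)` of the semigroup generated by `g`, where the set of
extremal rays `E` consists of the first `d` members of the family. -/
def FamApery {d m : ℕ} (g : Fin (d + m) → (Fin d → ℕ)) (s : Fin d → ℕ) : Prop :=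
  FamMem g s ∧ ∀ i : Fin d, ¬ ∃ t, FamMem g t ∧ t + g (Fin.castAdd m i) = s

/-- The semigroup generated by `g` (first `d` members extremal rays) is homogeneous: every
nonzero element of the Apéry set with respect to the extremal rays has all its factorizations
of the same length. -/
def FamHomogeneous {d m : ℕ} (g : Fin (d + m) → (Fin d → ℕ)) : Prop :=
  ∀ s, FamApery g s → s ≠ 0 → ∀ p q, FamFactorization g p s → FamFactorization g q s →
    ∑ i, p i = ∑ i, q i

/-- `p` is a maximal factorization: no factorization of the same semigroup element has
strictly larger length (so the length of `p` is the order of the element). -/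
def IsMaximalFactorization {n d : ℕ} (g : Fin n → (Fin d → ℕ)) (p : Fin n → ℕ) : Prop :=
  ∀ q, FamFactorization g q (∑ i, p i • g i) → ∑ i, q i ≤ ∑ i, p i

/-- The projection `π_e` killing the `e` smallest variables `z_1, …, z_e`. -/
def proj (k : Type) [Field k] (n e : ℕ) :
    MvPolynomial (Fin n) k →ₐ[k] MvPolynomial (Fin (n - e)) k :=
  MvPolynomial.aeval fun j : Fin n =>
    if hj : e ≤ (j : ℕ) then
      MvPolynomial.X (⟨(j : ℕ) - e, by have := j.isLt; omega⟩ : Fin (n - e))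
    else 0

/-- The generating family of the extension `S_b = λS ∪ {μb}` of the semigroup generated by
`g`, where `b = Σ α_i g i`. -/
def extFam {d r : ℕ} (g : Fin (d + r) → (Fin d → ℕ)) (α : Fin (d + r) → ℕ) (lam mu : ℕ) :
    Fin (d + (r + 1)) → (Fin d → ℕ) :=
  Fin.snoc (fun i => lam • g i) (mu • ∑ i, α i • g i)

/-- Generating families of simplicial affine semigroups obtained from `ℕ^d` by a finite
sequence of nice extensions. -/
inductive NiceSeq (d : ℕ) : ∀ r : ℕ, (Fin (d + r) → (Fin d → ℕ)) → Prop
  | base : NiceSeq d 0 (fun i j => if (i : ℕ) = (j : ℕ) then 1 else 0)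
  | step {r : ℕ} {g : Fin (d + r) → (Fin d → ℕ)} (α : Fin (d + r) → ℕ) (lam mu : ℕ)
      (hg : NiceSeq d r g) (hco : Nat.Coprime lam mu) (hnice : lam ≤ ∑ i, α i) :
      NiceSeq d (r + 1) (extFam g α lam mu)


/-- The ideal of `A/I` generated by the images of the variables corresponding to the
extremal rays (the first `d` variables). -/
def quotExtremal (d r : ℕ) (k : Type) [Field k] (I : Ideal (MvPolynomial (Fin (d + r)) k)) :
    Ideal (MvPolynomial (Fin (d + r)) k ⧸ I) :=
  Ideal.map (Ideal.Quotient.mk I)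
    (Ideal.span (Set.range fun i : Fin d =>
      (MvPolynomial.X (Fin.castAdd r i) : MvPolynomial (Fin (d + r)) k)))

end AffineSG
/-- The defining ideal `𝔭` of the monomial curve given by the numerical semigroup minimally
generated by the geometric sequence `m_i = a^{r+1-i} b^{i-1}`, `i = 1, …, r+1`:
the kernel of `z_i ↦ t^{m_i}`. -/
noncomputable def geomKer (k : Type) [Field k] (a b r : ℕ) :
    Ideal (MvPolynomial (Fin (r + 1)) k) :=
  RingHom.ker (MvPolynomial.aeval
    (fun i : Fin (r + 1) =>
      (Polynomial.X : Polynomial k) ^ (a ^ (r - (i : ℕ)) * b ^ (i : ℕ))) :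
        MvPolynomial (Fin (r + 1)) k →ₐ[k] Polynomial k)

/-- The binomials `P_i = z_{i+1}^a − z_i^b`, `i = 1, …, r`. -/
noncomputable def geomP (k : Type) [Field k] (a b r : ℕ) (i : Fin r) :
    MvPolynomial (Fin (r + 1)) k :=
  MvPolynomial.X i.succ ^ a - MvPolynomial.X i.castSucc ^ b

/-! Under `z_i ↦ t^{m_i}` a monomial `z^u` goes to `t^{φ(u)}` with `φ(u) = Σ u_i m_i`, so every
monomial of an element of `𝔭` shares its weight `φ` with another of its monomials. The moves
`z_{i+1}^a ↦ z_i^b` preserve `φ` (as `a m_{i+1} = b m_i`) and raise the degree by `b - a > 0`;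
since `gcd(a, b) = 1`, each weight class contains exactly one exponent vector with all exponents
of `z_2, …, z_{r+1}` below `a`, and it is the vector of largest degree in its class. Hence it is
never the leading monomial (the one of least degree) of an element of `𝔭`: the leading monomial
of every nonzero element of `𝔭` is divisible by some `z_{i+1}^a = LM(P_i)`. -/

theorem Finsupp.degree_le_weight {σ : Type*} (w : σ → ℕ) (hw : ∀ i, 1 ≤ w i) (u : σ →₀ ℕ) :
    u.degree ≤ Finsupp.weight w u := by
  rw [Finsupp.degree_apply, Finsupp.weight_apply, Finsupp.sum]
  exact Finset.sum_le_sum fun i _ => Nat.le_mul_of_pos_right _ (hw i)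

theorem MvPolynomial.aeval_X_pow_monomial {σ R : Type*} [CommSemiring R] (w : σ → ℕ)
    (v : σ →₀ ℕ) (c : R) :
    aeval (fun i => (Polynomial.X : Polynomial R) ^ w i) (monomial v c) =
      Polynomial.C c * Polynomial.X ^ Finsupp.weight w v := by
  rw [aeval_monomial, Polynomial.algebraMap_eq, Finsupp.weight_apply, Finsupp.prod,
    Finsupp.sum, ← Finset.prod_pow_eq_pow_sum]
  simp only [smul_eq_mul, ← pow_mul, mul_comm]

theorem MvPolynomial.exists_ne_weight_eq_of_aeval_eq_zero {σ R : Type*} [CommSemiring R]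
    (w : σ → ℕ) {f : MvPolynomial σ R}
    (hf : aeval (fun i => (Polynomial.X : Polynomial R) ^ w i) f = 0)
    {u : σ →₀ ℕ} (hu : u ∈ f.support) :
    ∃ v ∈ f.support, v ≠ u ∧ Finsupp.weight w v = Finsupp.weight w u := by
  classical
  have hcoeff : ∑ v ∈ f.support,
      (if Finsupp.weight w v = Finsupp.weight w u then coeff v f else 0) = 0 := by
    have := congrArg (Polynomial.coeff · (Finsupp.weight w u)) hf
    conv_lhs at this => rw [f.as_sum, map_sum]
    simpa [aeval_X_pow_monomial, Polynomial.finsetSum_coeff, Polynomial.coeff_C_mul,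
      Polynomial.coeff_X_pow, eq_comm] using this
  by_contra! h
  rw [Finset.sum_eq_single_of_mem u hu fun v hv hne => if_neg (h v hv hne), if_pos rfl] at hcoeff
  exact mem_support_iff.mp hu hcoeff

namespace AffineSG

variable {n : ℕ}

def ndrlKey (u : Fin n →₀ ℕ) : Lex (ℕ × Lex (Fin n → ℕ)) := toLex (edeg u, toLex ⇑u)

theorem ndrlKey_injective : Function.Injective (ndrlKey (n := n)) := fun _ _ h =>
  DFunLike.coe_injective (congrArg (fun p => ofLex (ofLex p).2) h)

theorem ndrlGT_iff_ndrlKey_lt {u v : Fin n →₀ ℕ} : ndrlGT u v ↔ ndrlKey u < ndrlKey v := by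
  rw [ndrlKey, ndrlKey, Prod.Lex.toLex_lt_toLex]
  exact or_congr_right (and_congr_right fun _ => exists_congr fun _ => and_comm)

variable {k : Type} [Field k] {f : MvPolynomial (Fin n) k} {m m' : Fin n →₀ ℕ}

theorem exists_isLM (hf : f ≠ 0) : ∃ m, IsLM f m := by
  obtain ⟨m, hm, hmin⟩ := f.support.exists_min_image ndrlKey (support_nonempty.mpr hf)
  exact ⟨m, hm, fun m' hm' hne => ndrlGT_iff_ndrlKey_lt.mpr <|
    (hmin m' hm').lt_of_ne fun h => hne (ndrlKey_injective h).symm⟩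

theorem IsLM.unique (h : IsLM f m) (h' : IsLM f m') : m = m' := by
  by_contra hne
  exact (ndrlGT_iff_ndrlKey_lt.mp (h.2 m' h'.1 (Ne.symm hne))).asymm
    (ndrlGT_iff_ndrlKey_lt.mp (h'.2 m h.1 hne))

theorem IsLM.ne_zero (h : IsLM f m) : f ≠ 0 :=
  ne_zero_iff.mpr ⟨m, mem_support_iff.mp h.1⟩

theorem IsLM.edeg_le (h : IsLM f m) (hm' : m' ∈ f.support) : edeg m ≤ edeg m' := by
  rcases eq_or_ne m' m with rfl | hne
  · exact le_rfl
  · rcases h.2 m' hm' hne with hlt | ⟨heq, -⟩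
    exacts [hlt.le, heq.le]

theorem isMinimalGroebnerBasis_image [DecidableEq (MvPolynomial (Fin n) k)] {ι : Type}
    [Fintype ι] {I : Ideal (MvPolynomial (Fin n) k)} (P : ι → MvPolynomial (Fin n) k)
    (lm : ι → Fin n →₀ ℕ) (hLM : ∀ i, IsLM (P i) (lm i)) (hP : ∀ i, P i ∈ I)
    (hdvd : ∀ f ∈ I, ∀ mf, IsLM f mf → ∃ i, lm i ≤ mf) (hlm : ∀ i j, lm i ≤ lm j → i = j) :
    IsMinimalGroebnerBasis (Finset.image P Finset.univ) I := by
  simp only [IsMinimalGroebnerBasis, IsGroebnerBasis, Finset.coe_image, Finset.coe_univ,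
    Set.image_univ, Finset.mem_image, Finset.mem_univ, true_and, forall_exists_index,
    forall_apply_eq_imp_iff]
  refine ⟨⟨Set.range_subset_iff.mpr hP, fun f hf hf0 => ?_⟩, fun ⟨i, hi⟩ => (hLM i).ne_zero hi,
    fun i j hne mi mj hi hj hle => hne ?_⟩
  · obtain ⟨mf, hmf⟩ := exists_isLM hf0
    obtain ⟨i, hi⟩ := hdvd f hf mf hmf
    exact ⟨P i, ⟨i, rfl⟩, lm i, mf, hLM i, hmf, hi⟩
  · rw [hi.unique (hLM i), hj.unique (hLM j)] at hle
    rw [hlm i j hle]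

end AffineSG

open AffineSG

/-- The weight `m_{i+1} = a^{r-i} b^i` of the variable `z_{i+1}`, with `0`-based `i`. -/
def geomWeight (a b r : ℕ) (i : Fin (r + 1)) : ℕ := a ^ (r - (i : ℕ)) * b ^ (i : ℕ)

section geomWeight

variable {a b r : ℕ}

theorem mem_geomKer_iff {k : Type} [Field k] {f : MvPolynomial (Fin (r + 1)) k} :
    f ∈ geomKer k a b r ↔
      aeval (fun i => (Polynomial.X : Polynomial k) ^ geomWeight a b r i) f = 0 :=
  RingHom.mem_ker

theorem one_le_geomWeight (ha : 0 < a) (hb : 0 < b) (i : Fin (r + 1)) :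
    1 ≤ geomWeight a b r i := Nat.mul_pos (pow_pos ha _) (pow_pos hb _)

theorem mul_geomWeight_succ (i : Fin r) :
    a * geomWeight a b r i.succ = b * geomWeight a b r i.castSucc := by
  have : r - (i : ℕ) = r - (i + 1) + 1 := by omega
  simp only [geomWeight, Fin.val_succ, Fin.val_castSucc, this, pow_succ]
  ring

theorem sum_mul_geomWeight_succ (u : Fin (r + 2) → ℕ) :
    ∑ i, u i * geomWeight a b (r + 1) i =
      a * ∑ i : Fin (r + 1), u i.castSucc * geomWeight a b r i + u (Fin.last _) * b ^ (r + 1) := by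
  rw [Fin.sum_univ_castSucc, Finset.mul_sum]
  congr 1
  · refine Finset.sum_congr rfl fun i _ => ?_
    have : r + 1 - (i : ℕ) = r - i + 1 := by omega
    simp only [geomWeight, Fin.val_castSucc, this, pow_succ]
    ring
  · simp [geomWeight]

/-- Modulo `a` the weight sees only the exponent of `z_{r+1}`, which it determines when it is
below `a` since `gcd(a, b) = 1`; then divide by `a` and recurse. -/
theorem eq_of_sum_mul_geomWeight_eq (ha : 0 < a) (hco : a.Coprime b)
    {u v : Fin (r + 1) → ℕ} (hu : ∀ i : Fin r, u i.succ < a) (hv : ∀ i : Fin r, v i.succ < a)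
    (h : ∑ i, u i * geomWeight a b r i = ∑ i, v i * geomWeight a b r i) : u = v := by
  induction r with
  | zero =>
    funext i
    simpa [Fin.fin_one_eq_zero i, geomWeight] using h
  | succ r ih =>
    rw [sum_mul_geomWeight_succ, sum_mul_geomWeight_succ] at h
    have hlast : u (Fin.last _) = v (Fin.last _) := by
      have hmod : u (Fin.last _) * b ^ (r + 1) ≡ v (Fin.last _) * b ^ (r + 1) [MOD a] := by
        simpa [Nat.ModEq, Nat.mul_add_mod] using congrArg (· % a) h
      exact (Nat.ModEq.cancel_right_of_coprime (hco.pow_right _) hmod).eq_of_lt_of_lt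
        (hu (Fin.last _)) (hv (Fin.last _))
    have hinit : Fin.init u = Fin.init v := by
      refine ih (fun i => ?_) (fun i => ?_) ?_
      · rw [Fin.init, ← Fin.succ_castSucc]; exact hu _
      · rw [Fin.init, ← Fin.succ_castSucc]; exact hv _
      · rw [hlast, Nat.add_right_cancel_iff] at h
        exact Nat.eq_of_mul_eq_mul_left ha h
    funext i
    exact Fin.lastCases hlast (fun j => congrFun hinit j) i

theorem weight_geomWeight_apply (u : Fin (r + 1) →₀ ℕ) :
    Finsupp.weight (geomWeight a b r) u = ∑ i, u i * geomWeight a b r i :=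
  Finsupp.weight_eq_sum _ _

/-- The move `z_{i+2}^a ↦ z_{i+1}^b`, which preserves the weight. -/
theorem exists_weight_eq_degree_add (v : Fin (r + 1) →₀ ℕ) (i : Fin r) (hvi : a ≤ v i.succ) :
    ∃ v', Finsupp.weight (geomWeight a b r) v' = Finsupp.weight (geomWeight a b r) v ∧
      v'.degree + a = v.degree + b := by
  obtain ⟨w, rfl⟩ : ∃ w, v = w + Finsupp.single i.succ a :=
    ⟨v - Finsupp.single i.succ a, (tsub_add_cancel_of_le (Finsupp.single_le_iff.mpr hvi)).symm⟩
  refine ⟨w + Finsupp.single i.castSucc b, ?_, ?_⟩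
  · simp only [map_add, Finsupp.weight_single, smul_eq_mul, mul_geomWeight_succ]
  · simp only [map_add, Finsupp.degree_single]
    omega

theorem degree_lt_of_weight_eq (ha : 0 < a) (hab : a < b) (hco : a.Coprime b)
    {u v : Fin (r + 1) →₀ ℕ} (hu : ∀ i : Fin r, u i.succ < a)
    (hw : Finsupp.weight (geomWeight a b r) v = Finsupp.weight (geomWeight a b r) u)
    (hne : v ≠ u) : v.degree < u.degree := by
  induction hN : Finsupp.weight (geomWeight a b r) u - v.degree using Nat.strong_induction_on
    generalizing v with
  | _ N ih =>
    by_cases hv : ∀ i : Fin r, v i.succ < a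
    · refine absurd (DFunLike.coe_injective ?_) hne
      rw [weight_geomWeight_apply, weight_geomWeight_apply] at hw
      exact eq_of_sum_mul_geomWeight_eq ha hco hv hu hw
    obtain ⟨i, hi⟩ : ∃ i : Fin r, a ≤ v i.succ := by simpa using hv
    obtain ⟨v', hw', hdeg⟩ := exists_weight_eq_degree_add (b := b) v i hi
    rcases eq_or_ne v' u with rfl | hne'
    · omega
    have hle := Finsupp.degree_le_weight _ (one_le_geomWeight ha (ha.trans hab)) v'
    exact (ih _ (by omega) (hw'.trans hw) hne' rfl).trans' (by omega)

end geomWeight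

section geomP

variable {k : Type} [Field k] {a b r : ℕ}

theorem geomP_eq_monomial_sub (i : Fin r) :
    geomP k a b r i =
      monomial (Finsupp.single i.succ a) 1 - monomial (Finsupp.single i.castSucc b) 1 := by
  rw [geomP, X_pow_eq_monomial, X_pow_eq_monomial]

theorem isLM_geomP (hab : a < b) (i : Fin r) :
    IsLM (geomP k a b r i) (Finsupp.single i.succ a) := by
  classical
  have hne : Finsupp.single i.castSucc b ≠ Finsupp.single i.succ a := fun h => by
    have := DFunLike.congr_fun h i.castSucc
    simp [(Fin.castSucc_lt_succ (i := i)).ne'] at this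
    omega
  refine ⟨by simp [geomP_eq_monomial_sub, coeff_monomial, hne], fun m hm hm' => ?_⟩
  obtain rfl : m = Finsupp.single i.castSucc b := by
    by_contra h
    simp [geomP_eq_monomial_sub, coeff_monomial, Ne.symm hm', Ne.symm h] at hm
  left
  simpa [edeg, Finsupp.sum_single_index] using hab

theorem geomP_mem_geomKer (i : Fin r) : geomP k a b r i ∈ geomKer k a b r := by
  rw [mem_geomKer_iff, geomP, map_sub, map_pow, map_pow, aeval_X, aeval_X, ← pow_mul, ← pow_mul,
    mul_comm, mul_geomWeight_succ, mul_comm, sub_self]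

theorem exists_le_of_isLM_of_mem_geomKer (ha : 0 < a) (hab : a < b) (hco : a.Coprime b)
    {f : MvPolynomial (Fin (r + 1)) k} (hf : f ∈ geomKer k a b r) {m : Fin (r + 1) →₀ ℕ}
    (hm : IsLM f m) : ∃ i : Fin r, a ≤ m i.succ := by
  by_contra! h
  obtain ⟨v, hv, hne, hw⟩ := exists_ne_weight_eq_of_aeval_eq_zero _ (mem_geomKer_iff.mp hf) hm.1
  exact (degree_lt_of_weight_eq ha hab hco h hw hne).not_ge (hm.edeg_le hv)

end geomP

open AffineSG MvPolynomial in
theorem geom_groebner_basis_general {k : Type} [Field k] (a b r : ℕ)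
    [DecidableEq (MvPolynomial (Fin (r + 1)) k)]
    (ha : 0 < a) (hab : a < b) (hco : Nat.Coprime a b) :
    IsMinimalGroebnerBasis (Finset.image (geomP k a b r) Finset.univ) (geomKer k a b r) ∧
      ∀ i : Fin r, IsLM (geomP k a b r i) (Finsupp.single i.succ a) := by
  refine ⟨isMinimalGroebnerBasis_image _ _ (isLM_geomP hab) geomP_mem_geomKer
    (fun f hf m hm => ?_) (fun i j hij => ?_), isLM_geomP hab⟩
  · obtain ⟨i, hi⟩ := exists_le_of_isLM_of_mem_geomKer ha hab hco hf hm
    exact ⟨i, Finsupp.single_le_iff.mpr hi⟩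
  · have : a ≤ Finsupp.single j.succ a i.succ := Finsupp.single_le_iff.mp hij
    by_contra hne
    simp [Ne.symm hne] at this
    omega

open AffineSG MvPolynomial in
/-- With respect to the negative degree reverse lexicographic order induced by
`z_{r+1} > ⋯ > z_1`, the set `G = {P_1, …, P_r}` with `P_i = z_{i+1}^a − z_i^b` is a minimal
Gröbner basis of the defining ideal `𝔭`; in particular `LM(P_i) = z_{i+1}^a`. -/
theorem geom_groebner_basis {k : Type} [Field k] (a b r : ℕ)
    [DecidableEq (MvPolynomial (Fin (r + 1)) k)]
    (ha : 0 < a) (hab : a < b) (hco : Nat.Coprime a b) (hr : 0 < r) :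
    IsMinimalGroebnerBasis (Finset.image (geomP k a b r) Finset.univ) (geomKer k a b r) ∧
      ∀ i : Fin r, IsLM (geomP k a b r i) (Finsupp.single i.succ a) :=
  geom_groebner_basis_general a b r ha hab hco
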